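/- For the four-compartment acetone model with constant inputs, every complex eigenvalue of the 4×4 system matrix A has nonpositive real part; moreover, if det A ≠ 0, then every eigenvalue of A has strictly negative real part. -/

import Mathlib

/-!
The system matrix `A` is a compartmental (Metzler) matrix, and weighting its columns by the
compartment volumes `w` gives the column sums `-V̇_A, 0, -k_met λ_b:liv, 0`, all `≤ 0`:
transport between compartments conserves the total amount of acetone. For an eigenpair
`A v = μ v` the weighted `ℓ¹` norm then gives
`Re μ · ∑ wᵢ |vᵢ| ≤ ∑ wᵢ (|μ - aᵢᵢ| + aᵢᵢ) |vᵢ| ≤ (wᵀ A) |v| ≤ 0`. On the imaginary axis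
every `|μ - aᵢᵢ| + aᵢᵢ` is positive unless `μ = 0`, which `det A ≠ 0` excludes.
-/

open Matrix Finset

/-- Right-hand side of the four-compartment acetone model (constant inputs): the state is
`c = (C_bro, C_A, C_liv, C_tis)` (indices `0,1,2,3`). -/
noncomputable def acetoneRHS (Vbro VA Vliv Vtis lba lma lmb lbl lbt kpr kmet qbro qliv
    VdA Qc D CI : ℝ) (c : Fin 4 → ℝ) : Fin 4 → ℝ :=
  ![(VdA * (CI - c 0) + D * (c 1 - c 0) +
      qbro * Qc * (((1 - qbro) * lba * c 1 + qbro * (lma / lmb) * c 0) - (lma / lmb) * c 0)) / Vbro,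
    (D * (c 0 - c 1) +
      (1 - qbro) * Qc * ((qliv * lbl * c 2 + (1 - qliv) * lbt * c 3) - lba * c 1)) / VA,
    (kpr - kmet * lbl * c 2 +
      qliv * (1 - qbro) * Qc * (((1 - qbro) * lba * c 1 + qbro * (lma / lmb) * c 0)
        - lbl * c 2)) / Vliv,
    ((1 - qliv) * (1 - qbro) * Qc * (((1 - qbro) * lba * c 1 + qbro * (lma / lmb) * c 0)
        - lbt * c 3)) / Vtis]

namespace Complex

lemma re_le_norm_sub_ofReal_add (z : ℂ) (a : ℝ) : z.re ≤ ‖z - a‖ + a := by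
  linarith [re_le_norm (z - a), show (z - a).re = z.re - a by simp]

lemma norm_sub_ofReal_add_pos (a : ℝ) {z : ℂ} (hre : z.re = 0) (hz : z ≠ 0) :
    0 < ‖z - a‖ + a := by
  have him : (z - a).im ≠ 0 := by
    simpa using fun him => hz (Complex.ext hre him)
  have := abs_re_lt_norm.mpr him
  simp only [sub_re, ofReal_re, hre, zero_sub, abs_neg] at this
  linarith [neg_abs_le a]

end Complex

namespace Matrix

lemma eq_of_forall_mulVec_add_eq {m n R : Type*} [Fintype n] [Ring R]
    {A B : Matrix m n R} {a b : m → R} (h : ∀ x, A *ᵥ x + a = B *ᵥ x + b) : A = B := by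
  have hab : a = b := by simpa using h 0
  exact ext_iff_mulVec.mpr fun x => by simpa [hab] using h x

variable {n : Type*}

def IsMetzler (M : Matrix n n ℝ) : Prop := ∀ i j, i ≠ j → 0 ≤ M i j

variable [Fintype n] [DecidableEq n]

lemma IsMetzler.norm_sub_diag_mul_le {M : Matrix n n ℝ} (hM : M.IsMetzler) {μ : ℂ} {v : n → ℂ}
    (hv : M.map (↑) *ᵥ v = μ • v) (i : n) :
    (‖μ - M i i‖ + M i i) * ‖v i‖ ≤ (M *ᵥ fun j => ‖v j‖) i := by
  have hrow : (μ - M i i) * v i = ∑ j ∈ univ.erase i, (M i j : ℂ) * v j := by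
    have h := congrFun hv i
    simp only [mulVec, dotProduct, map_apply, Pi.smul_apply, smul_eq_mul,
      ← add_sum_erase _ _ (mem_univ i)] at h
    linear_combination -h
  calc (‖μ - M i i‖ + M i i) * ‖v i‖
      = ‖∑ j ∈ univ.erase i, (M i j : ℂ) * v j‖ + M i i * ‖v i‖ := by
        rw [← hrow, norm_mul]; ring
    _ ≤ ∑ j ∈ univ.erase i, M i j * ‖v j‖ + M i i * ‖v i‖ := by
        gcongr
        refine (norm_sum_le _ _).trans (sum_le_sum fun j hj => ?_)
        rw [norm_mul, Complex.norm_real, Real.norm_of_nonneg (hM i j (ne_of_mem_erase hj).symm)]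
    _ = (M *ᵥ fun j => ‖v j‖) i := by
        rw [mulVec, dotProduct, ← add_sum_erase _ _ (mem_univ i)]; ring

theorem IsMetzler.re_eigenvalue_nonpos {M : Matrix n n ℝ} (hM : M.IsMetzler) {w : n → ℝ}
    (hw : ∀ i, 0 < w i) (hwM : w ᵥ* M ≤ 0) {μ : ℂ} {v : n → ℂ} (hv0 : v ≠ 0)
    (hv : M.map (↑) *ᵥ v = μ • v) :
    μ.re ≤ 0 ∧ (μ.re = 0 → μ = 0) := by
  set x : n → ℝ := fun j => ‖v j‖
  have hsum : ∑ i, w i * x i * (‖μ - M i i‖ + M i i) ≤ 0 :=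
    calc ∑ i, w i * x i * (‖μ - M i i‖ + M i i)
        ≤ ∑ i, w i * (M *ᵥ x) i := sum_le_sum fun i _ => by
          rw [mul_assoc, mul_comm (x i)]
          exact mul_le_mul_of_nonneg_left (hM.norm_sub_diag_mul_le hv i) (hw i).le
      _ = (w ᵥ* M) ⬝ᵥ x := by rw [← dotProduct_mulVec]; rfl
      _ ≤ 0 := sum_nonpos fun j _ => mul_nonpos_of_nonpos_of_nonneg (hwM j) (norm_nonneg _)
  obtain ⟨k, hk⟩ := Function.ne_iff.mp hv0
  have hwx : ∀ i, 0 ≤ w i * x i := fun i => mul_nonneg (hw i).le (norm_nonneg _)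
  have hwxk : 0 < w k * x k := mul_pos (hw k) (norm_pos_iff.mpr hk)
  constructor
  · have hre : μ.re * ∑ i, w i * x i ≤ 0 := by
      rw [mul_sum]
      refine le_trans (sum_le_sum fun i _ => ?_) hsum
      rw [mul_comm]
      exact mul_le_mul_of_nonneg_left (μ.re_le_norm_sub_ofReal_add _) (hwx i)
    exact nonpos_of_mul_nonpos_left hre <|
      sum_pos' (fun i _ => hwx i) ⟨k, mem_univ k, hwxk⟩
  · intro hre
    by_contra hμ
    refine hsum.not_gt (sum_pos' (fun i _ => mul_nonneg (hwx i) ?_) ⟨k, mem_univ k, ?_⟩)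
    · simpa [hre] using μ.re_le_norm_sub_ofReal_add (M i i)
    · exact mul_pos hwxk (Complex.norm_sub_ofReal_add_pos _ hre hμ)

lemma det_eq_zero_of_map_ofReal_mulVec_eq_zero {M : Matrix n n ℝ} {v : n → ℂ} (hv0 : v ≠ 0)
    (hv : M.map (↑) *ᵥ v = 0) : M.det = 0 :=
  Complex.ofReal_eq_zero.mp <|
    (Complex.ofRealHom.map_det M).trans (exists_mulVec_eq_zero_iff.mp ⟨v, hv0, hv⟩)

end Matrix

noncomputable def acetoneMatrix
    (Vbro VA Vliv Vtis lba lma lmb lbl lbt kmet qbro qliv VdA Qc D : ℝ) : Matrix (Fin 4) (Fin 4) ℝ :=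
  !![-(VdA + D + qbro * (1 - qbro) * Qc * (lma / lmb)) / Vbro,
      (D + qbro * (1 - qbro) * Qc * lba) / Vbro, 0, 0;
    D / VA, -(D + (1 - qbro) * Qc * lba) / VA,
      (1 - qbro) * Qc * qliv * lbl / VA, (1 - qbro) * Qc * (1 - qliv) * lbt / VA;
    qliv * (1 - qbro) * Qc * qbro * (lma / lmb) / Vliv,
      qliv * (1 - qbro) * Qc * (1 - qbro) * lba / Vliv,
      -((kmet + qliv * (1 - qbro) * Qc) * lbl) / Vliv, 0;
    (1 - qliv) * (1 - qbro) * Qc * qbro * (lma / lmb) / Vtis,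
      (1 - qliv) * (1 - qbro) * Qc * (1 - qbro) * lba / Vtis, 0,
      -((1 - qliv) * (1 - qbro) * Qc * lbt) / Vtis]

section AcetoneModel

variable (Vbro VA Vliv Vtis lba lma lmb lbl lbt kpr kmet qbro qliv VdA Qc D CI : ℝ)

lemma acetoneRHS_eq_mulVec_add (c : Fin 4 → ℝ) :
    acetoneRHS Vbro VA Vliv Vtis lba lma lmb lbl lbt kpr kmet qbro qliv VdA Qc D CI c =
      acetoneMatrix Vbro VA Vliv Vtis lba lma lmb lbl lbt kmet qbro qliv VdA Qc D *ᵥ c +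
        acetoneRHS Vbro VA Vliv Vtis lba lma lmb lbl lbt kpr kmet qbro qliv VdA Qc D CI 0 := by
  ext i
  fin_cases i <;>
    simp [acetoneRHS, acetoneMatrix, dotProduct, Fin.sum_univ_four] <;> ring

variable {Vbro VA Vliv Vtis lba lma lmb lbl lbt kmet qbro qliv VdA Qc D}

lemma acetoneMatrix_isMetzler (hVbro : 0 ≤ Vbro) (hVA : 0 ≤ VA) (hVliv : 0 ≤ Vliv)
    (hVtis : 0 ≤ Vtis) (hlba : 0 ≤ lba) (hlma : 0 ≤ lma) (hlmb : 0 ≤ lmb) (hlbl : 0 ≤ lbl)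
    (hlbt : 0 ≤ lbt) (hQc : 0 ≤ Qc) (hD : 0 ≤ D) (hqbro0 : 0 ≤ qbro) (hqbro1 : qbro ≤ 1)
    (hqliv0 : 0 ≤ qliv) (hqliv1 : qliv ≤ 1) :
    (acetoneMatrix Vbro VA Vliv Vtis lba lma lmb lbl lbt kmet qbro qliv VdA Qc D).IsMetzler := by
  have hqbro : 0 ≤ 1 - qbro := sub_nonneg.mpr hqbro1
  have hqliv : 0 ≤ 1 - qliv := sub_nonneg.mpr hqliv1
  intro i j hij
  fin_cases i <;> fin_cases j <;> simp [acetoneMatrix] at hij ⊢ <;>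
    apply_rules [add_nonneg, mul_nonneg, div_nonneg, inv_nonneg_of_nonneg]

lemma vecMul_acetoneMatrix (hVbro : Vbro ≠ 0) (hVA : VA ≠ 0) (hVliv : Vliv ≠ 0)
    (hVtis : Vtis ≠ 0) :
    ![Vbro, VA, Vliv, Vtis] ᵥ*
        acetoneMatrix Vbro VA Vliv Vtis lba lma lmb lbl lbt kmet qbro qliv VdA Qc D =
      ![-VdA, 0, -(kmet * lbl), 0] := by
  ext j
  fin_cases j <;> simp [acetoneMatrix, vecMul, dotProduct, Fin.sum_univ_four] <;>
    field_simp <;> ring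

end AcetoneModel

theorem acetone_system_matrix_stable_general
    (Vbro VA Vliv Vtis lba lma lmb lbl lbt kpr kmet qbro qliv VdA Qc D CI : ℝ)
    (hVbro : 0 < Vbro) (hVA : 0 < VA) (hVliv : 0 < Vliv) (hVtis : 0 < Vtis)
    (hlba : 0 < lba) (hlma : 0 < lma) (hlmb : 0 < lmb) (hlbl : 0 < lbl) (hlbt : 0 < lbt)
    (hVdA : 0 ≤ VdA) (hQc : 0 ≤ Qc) (hD : 0 ≤ D) (hkmet : 0 ≤ kmet)
    (hqbro0 : 0 ≤ qbro) (hqbro1 : qbro < 1) (hqliv0 : 0 < qliv) (hqliv1 : qliv < 1)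
    (A : Matrix (Fin 4) (Fin 4) ℝ) (b : Fin 4 → ℝ)
    (hAb : ∀ x : Fin 4 → ℝ, A *ᵥ x + b =
      acetoneRHS Vbro VA Vliv Vtis lba lma lmb lbl lbt kpr kmet qbro qliv VdA Qc D CI x) :
    (∀ μ : ℂ, (∃ v : Fin 4 → ℂ, v ≠ 0 ∧ (A.map Complex.ofReal) *ᵥ v = μ • v) → μ.re ≤ 0) ∧
    (A.det ≠ 0 →
      ∀ μ : ℂ, (∃ v : Fin 4 → ℂ, v ≠ 0 ∧ (A.map Complex.ofReal) *ᵥ v = μ • v) → μ.re < 0) := by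
  have hA : A = acetoneMatrix Vbro VA Vliv Vtis lba lma lmb lbl lbt kmet qbro qliv VdA Qc D :=
    eq_of_forall_mulVec_add_eq fun x => (hAb x).trans (acetoneRHS_eq_mulVec_add ..)
  have hMetzler : A.IsMetzler := hA ▸ acetoneMatrix_isMetzler hVbro.le hVA.le hVliv.le
    hVtis.le hlba.le hlma.le hlmb.le hlbl.le hlbt.le hQc hD hqbro0 hqbro1.le hqliv0.le hqliv1.le
  have hvol : ![Vbro, VA, Vliv, Vtis] ᵥ* A ≤ 0 := by
    rw [hA, vecMul_acetoneMatrix hVbro.ne' hVA.ne' hVliv.ne' hVtis.ne']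
    intro j
    fin_cases j <;> simp [hVdA, mul_nonneg hkmet hlbl.le]
  have hspec : ∀ {μ : ℂ} {v : Fin 4 → ℂ}, v ≠ 0 → A.map Complex.ofReal *ᵥ v = μ • v →
      μ.re ≤ 0 ∧ (μ.re = 0 → μ = 0) :=
    hMetzler.re_eigenvalue_nonpos (fun i => by fin_cases i <;> assumption) hvol
  refine ⟨fun μ ⟨v, hv0, hv⟩ => (hspec hv0 hv).1, fun hdet μ ⟨v, hv0, hv⟩ => ?_⟩
  refine (hspec hv0 hv).1.lt_of_ne fun hre => hdet ?_
  rw [(hspec hv0 hv).2 hre, zero_smul] at hv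
  exact det_eq_zero_of_map_ofReal_mulVec_eq_zero hv0 hv

/-- For the four-compartment acetone model with constant inputs, every complex
eigenvalue of the `4×4` system matrix `A` (the coefficient matrix of the homogeneous part,
so that the system reads `ċ = A c + b`) has nonpositive real part; moreover, if `det A ≠ 0`,
then every eigenvalue of `A` has strictly negative real part. -/
theorem acetone_system_matrix_stable
    (Vbro VA Vliv Vtis lba lma lmb lbl lbt kpr kmet qbro qliv VdA Qc D CI : ℝ)
    (hVbro : 0 < Vbro) (hVA : 0 < VA) (hVliv : 0 < Vliv) (hVtis : 0 < Vtis)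
    (hlba : 0 < lba) (hlma : 0 < lma) (hlmb : 0 < lmb) (hlbl : 0 < lbl) (hlbt : 0 < lbt)
    (hVdA : 0 ≤ VdA) (hQc : 0 ≤ Qc) (hD : 0 ≤ D) (hkpr : 0 ≤ kpr) (hkmet : 0 ≤ kmet)
    (hqbro0 : 0 ≤ qbro) (hqbro1 : qbro < 1) (hqliv0 : 0 < qliv) (hqliv1 : qliv < 1)
    (A : Matrix (Fin 4) (Fin 4) ℝ) (b : Fin 4 → ℝ)
    (hAb : ∀ x : Fin 4 → ℝ, A *ᵥ x + b =
      acetoneRHS Vbro VA Vliv Vtis lba lma lmb lbl lbt kpr kmet qbro qliv VdA Qc D CI x) :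
    (∀ μ : ℂ, (∃ v : Fin 4 → ℂ, v ≠ 0 ∧ (A.map Complex.ofReal) *ᵥ v = μ • v) → μ.re ≤ 0) ∧
    (A.det ≠ 0 →
      ∀ μ : ℂ, (∃ v : Fin 4 → ℂ, v ≠ 0 ∧ (A.map Complex.ofReal) *ᵥ v = μ • v) → μ.re < 0) :=
  acetone_system_matrix_stable_general Vbro VA Vliv Vtis lba lma lmb lbl lbt kpr kmet qbro qliv VdA
    Qc D CI hVbro hVA hVliv hVtis hlba hlma hlmb hlbl hlbt hVdA hQc hD hkmet hqbro0 hqbro1 hqliv0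
    hqliv1 A b hAb
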